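/- arXiv:1110.5117 — 2 statements merged into one kernel-verified Lean document; each statement's English description precedes it below -/
import Mathlib

section
/- Let A → B be a faithfully flat ring map and F a complex of A-modules in D(A). If F ⊗^L_A B has Tor-amplitude in [a,b] as a complex of B-modules, then F has Tor-amplitude in [a,b] as a complex of A-modules. -/
open CategoryTheory Limits MonoidalCategory HomologicalComplex

section Defs

variable (R : Type) [CommRing R]

/-- Degreewise tensor of a cochain complex with a module. -/
noncomputable def tensorComplex (F : CochainComplex (ModuleCat.{0} R) ℤ) (K : ModuleCat.{0} R) :
    CochainComplex (ModuleCat.{0} R) ℤ :=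
  ((tensorRight K).mapHomologicalComplex _).obj F

/-- The complex vanishes in all sufficiently large degrees. -/
def IsBoundedAbove (F : CochainComplex (ModuleCat.{0} R) ℤ) : Prop :=
  ∃ N : ℤ, ∀ i > N, IsZero (F.X i)

/-- The complex vanishes outside a bounded range of degrees. -/
def IsBoundedC (F : CochainComplex (ModuleCat.{0} R) ℤ) : Prop :=
  ∃ m N : ℤ, ∀ i : ℤ, (i < m ∨ N < i) → IsZero (F.X i)

def DegreewiseFGFree (F : CochainComplex (ModuleCat.{0} R) ℤ) : Prop :=
  ∀ i : ℤ, Module.Finite R (F.X i) ∧ Module.Free R (F.X i)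

def DegreewiseFGProj (F : CochainComplex (ModuleCat.{0} R) ℤ) : Prop :=
  ∀ i : ℤ, Module.Finite R (F.X i) ∧ Module.Projective R (F.X i)

/-- A strictly perfect complex: bounded and degreewise finitely generated projective. -/
def IsPerfectData (F : CochainComplex (ModuleCat.{0} R) ℤ) : Prop :=
  IsBoundedC R F ∧ DegreewiseFGProj R F

/-- Tor-amplitude in `[a,b]` for a complex of projective (hence flat) modules, where the
underived degreewise tensor computes the derived tensor: for every module `K`, the homology
of `F ⊗ K` is concentrated in degrees `[a,b]`. -/
def TorAmpPlain (F : CochainComplex (ModuleCat.{0} R) ℤ) (a b : ℤ) : Prop :=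
  ∀ (K : ModuleCat.{0} R) (i : ℤ), (i < a ∨ b < i) → IsZero ((tensorComplex R F K).homology i)

/-- Tor-amplitude in `[a,b]` for an arbitrary complex, tested on every bounded-above
degreewise-projective resolution (such a resolution computes the derived tensor product). -/
def TorAmp (F : CochainComplex (ModuleCat.{0} R) ℤ) (a b : ℤ) : Prop :=
  ∀ (P : CochainComplex (ModuleCat.{0} R) ℤ) (f : P ⟶ F),
    IsBoundedAbove R P → (∀ i : ℤ, Module.Projective R (P.X i)) → QuasiIso f →
      TorAmpPlain R P a b

/-- A complex is pseudo-coherent if it admits a quasi-isomorphism from a bounded-above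
complex of finitely generated free modules. -/
def PseudoCoherent (F : CochainComplex (ModuleCat.{0} R) ℤ) : Prop :=
  ∃ (P : CochainComplex (ModuleCat.{0} R) ℤ) (f : P ⟶ F),
    IsBoundedAbove R P ∧ DegreewiseFGFree R P ∧ QuasiIso f

/-- A complex is `n`-pseudo-coherent if it admits a map from a bounded complex of finitely
generated free modules which is an isomorphism on cohomology in degrees `> n` and a
surjection in degree `n`. -/
def NPseudoCoherent (n : ℤ) (F : CochainComplex (ModuleCat.{0} R) ℤ) : Prop :=
  ∃ (P : CochainComplex (ModuleCat.{0} R) ℤ) (f : P ⟶ F),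
    IsBoundedC R P ∧ DegreewiseFGFree R P ∧
      (∀ i > n, IsIso (homologyMap f i)) ∧ Epi (homologyMap f n)

end Defs

/-!
Let `P → F` be a bounded-above projective resolution and `K` an `A`-module. Extension of scalars
is monoidal, so `B ⊗_A (P ⊗_A K) ≅ (B ⊗_A P) ⊗_B (B ⊗_A K)`, whose cohomology vanishes outside
`[a,b]` by the hypothesis tested on the `B`-module `B ⊗_A K`. Faithfully flat base change
reflects exactness, so `P ⊗_A K` is exact outside `[a,b]` as well.
-/

universe u

lemma HomologicalComplex.ExactAt.of_map_extendScalars {A B : Type u} [CommRing A]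
    [CommRing B] {f : A →+* B} (hf : f.FaithfullyFlat) {ι : Type*} {c : ComplexShape ι}
    {C : HomologicalComplex (ModuleCat.{u} A) c} {i : ι}
    (h : (((ModuleCat.extendScalars f).mapHomologicalComplex c).obj C).ExactAt i) :
    C.ExactAt i := by
  algebraize [f]
  rw [exactAt_iff, ShortComplex.ShortExact.moduleCat_exact_iff_function_exact] at h ⊢
  exact Module.FaithfullyFlat.lTensor_reflects_exact A B _ _ h

noncomputable def tensorComplexExtendScalarsIso {A B : Type} [CommRing A] [CommRing B]
    (f : A →+* B) (C : CochainComplex (ModuleCat.{0} A) ℤ) (K : ModuleCat.{0} A) :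
    tensorComplex B (((ModuleCat.extendScalars f).mapHomologicalComplex _).obj C)
        ((ModuleCat.extendScalars f).obj K) ≅
      ((ModuleCat.extendScalars f).mapHomologicalComplex _).obj (tensorComplex A C K) :=
  (NatIso.mapHomologicalComplex
    (Functor.Monoidal.commTensorRight (ModuleCat.extendScalars f) K) _).app C

/-- Let `A → B` be faithfully flat and `F` a complex of `A`-modules.  If the derived base
change `F ⊗^L_A B` (computed on any bounded-above projective resolution `P → F` by
degreewise base change) has Tor-amplitude in `[a,b]` over `B`, then `F` has Tor-amplitude
in `[a,b]` over `A`. -/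
theorem torAmp_descends_faithfullyFlat (A : Type) [CommRing A] (B : Type) [CommRing B]
    [Algebra A B] [Module.FaithfullyFlat A B]
    (F : CochainComplex (ModuleCat.{0} A) ℤ) (a b : ℤ)
    (h : ∀ (P : CochainComplex (ModuleCat.{0} A) ℤ) (f : P ⟶ F),
      IsBoundedAbove A P → (∀ i : ℤ, Module.Projective A (P.X i)) → QuasiIso f →
        TorAmpPlain B
          (((ModuleCat.extendScalars (algebraMap A B)).mapHomologicalComplex _).obj P) a b) :
    TorAmp A F a b := by
  intro P f hbd hproj hqi K i hi
  have hexact := h P f hbd hproj hqi ((ModuleCat.extendScalars (algebraMap A B)).obj K) i hi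
  rw [← HomologicalComplex.exactAt_iff_isZero_homology] at hexact ⊢
  exact HomologicalComplex.ExactAt.of_map_extendScalars
    (RingHom.faithfullyFlat_algebraMap_iff.mpr ‹_›)
    (hexact.of_iso (tensorComplexExtendScalarsIso _ P K))
end

section
/- Let A be a commutative ring and M a perfect complex over A. For each integer i, the function on Spec A sending a prime p to the k(p)-dimension of H^i(M ⊗^L_A k(p)) is upper semi-continuous in the Zariski topology. -/
open CategoryTheory Limits MonoidalCategory HomologicalComplex

/-- The residue field of `A` at a prime `p`. -/
noncomputable abbrev kappa (A : Type) [CommRing A] (p : PrimeSpectrum A) : Type :=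
  IsLocalRing.ResidueField (Localization.AtPrime p.asIdeal)

/-- The derived fiber `M ⊗^L_A k(p)` of a perfect complex, computed degreewise. -/
noncomputable def fiberComplex (A : Type) [CommRing A] (p : PrimeSpectrum A)
    (M : CochainComplex (ModuleCat.{0} A) ℤ) : CochainComplex (ModuleCat.{0} (kappa A p)) ℤ :=
  ((ModuleCat.extendScalars (algebraMap A (kappa A p))).mapHomologicalComplex _).obj M


/-!
Choose retractions `X^j → A^{m_j} → X^j` of the three terms of `M` around degree `i`. Reading
the differentials through them gives matrices `D₀`, `D₁` over `A`, and `X^i` is the image of an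
idempotent `e` of `A^{m_i}`; let `E` be the matrix of `1 - e`. Everything commutes with base
change to `k(p)`, so rank–nullity for the fiber complex gives
`dim H^i(M ⊗ k(p)) + rk D₀(p) + rk D₁(p) + rk E(p) = m_i`.
Each `p ↦ rk N(p)` is lower semicontinuous, because `rk N(p) ≤ r` says that all
`(r+1)`-minors of `N` lie in `p`; hence `p ↦ dim H^i(M ⊗ k(p))` is upper semicontinuous.
-/

open CategoryTheory Module

universe u

section MatrixRank

open Matrix

variable {K : Type*} [Field K]

theorem exists_linearIndependent_comp_of_le_finrank_span {ι V : Type*} [Finite ι]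
    [AddCommGroup V] [Module K V] (v : ι → V) {r : ℕ}
    (hr : r ≤ finrank K (Submodule.span K (Set.range v))) :
    ∃ g : Fin r → ι, LinearIndependent K (v ∘ g) := by
  obtain ⟨κ, a, ha, hspan, hli⟩ := exists_linearIndependent' K v
  have : Finite κ := Finite.of_injective a ha
  have : Fintype κ := Fintype.ofFinite κ
  rw [← hspan, finrank_span_eq_card hli] at hr
  let e : Fin r ↪ κ := (Fin.castLEEmb hr).trans (Fintype.equivFin κ).symm.toEmbedding
  exact ⟨a ∘ e, hli.comp e e.injective⟩

variable {m n : Type*} [Fintype m] [Fintype n]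

theorem Matrix.exists_isUnit_submatrix_of_le_rank (N : Matrix m n K) {r : ℕ}
    (hr : r ≤ N.rank) :
    ∃ (f : Fin r → m) (g : Fin r → n), IsUnit (N.submatrix f g) := by
  rw [N.rank_eq_finrank_span_cols] at hr
  obtain ⟨g, hg⟩ := exists_linearIndependent_comp_of_le_finrank_span N.col hr
  have hB : r ≤ (N.submatrix id g).rank := by
    have hrows : LinearIndependent K (N.submatrix id g)ᵀ.row := hg
    rw [← rank_transpose, hrows.rank_matrix, Fintype.card_fin]
  rw [rank_eq_finrank_span_row] at hB
  obtain ⟨f, hf⟩ := exists_linearIndependent_comp_of_le_finrank_span _ hB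
  exact ⟨f, g, linearIndependent_rows_iff_isUnit.1 hf⟩

theorem Matrix.rank_le_iff_forall_det_submatrix_eq_zero [DecidableEq m] [DecidableEq n]
    (N : Matrix m n K) (r : ℕ) :
    N.rank ≤ r ↔ ∀ (f : Fin (r + 1) → m) (g : Fin (r + 1) → n), (N.submatrix f g).det = 0 := by
  constructor
  · intro hr f g
    by_contra hdet
    have := N.rank_submatrix_le f g
    rw [rank_of_isUnit _ ((isUnit_iff_isUnit_det _).2 (Ne.isUnit hdet)), Fintype.card_fin] at this
    omega
  · intro hdet
    by_contra! hr
    obtain ⟨f, g, hfg⟩ := N.exists_isUnit_submatrix_of_le_rank hr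
    exact ((isUnit_iff_isUnit_det _).1 hfg).ne_zero (hdet f g)

end MatrixRank

section Spec

variable {A : Type} [CommRing A] {m n : Type*} [Fintype m] [Fintype n] [DecidableEq m]
  [DecidableEq n]

theorem lowerSemicontinuous_rank_map_residueField (N : Matrix m n A) :
    LowerSemicontinuous fun p : PrimeSpectrum A => (N.map (algebraMap A (kappa A p))).rank := by
  refine lowerSemicontinuous_iff_isClosed_preimage.2 fun r => ?_
  convert PrimeSpectrum.isClosed_zeroLocus
    (Set.range fun fg : (Fin (r + 1) → m) × (Fin (r + 1) → n) => (N.submatrix fg.1 fg.2).det)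
  ext p
  simp only [Set.mem_preimage, Set.mem_Iic, Matrix.rank_le_iff_forall_det_submatrix_eq_zero,
    PrimeSpectrum.mem_zeroLocus, Set.range_subset_iff, Prod.forall, SetLike.mem_coe,
    Matrix.submatrix_map, ← RingHom.mapMatrix_apply, ← RingHom.map_det,
    Ideal.algebraMap_residueField_eq_zero]

end Spec

theorem upperSemicontinuous_of_add_eq_of_lowerSemicontinuous {X : Type*} [TopologicalSpace X]
    {f g : X → ℕ} {m : ℕ} (hg : LowerSemicontinuous g) (hfg : ∀ x, f x + g x = m) :
    UpperSemicontinuous f := by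
  refine upperSemicontinuous_iff_isClosed_preimage.2 fun n => ?_
  by_cases hn : n ≤ m
  · convert lowerSemicontinuous_iff_isClosed_preimage.1 hg (m - n) using 1
    ext x
    have := hfg x
    simp only [Set.mem_preimage, Set.mem_Ici, Set.mem_Iic]
    omega
  · convert isClosed_empty
    ext x
    have := hfg x
    simp only [Set.mem_preimage, Set.mem_Ici, Set.mem_empty_iff_false, iff_false]
    omega

namespace ModuleCat

variable {A K : Type*} [CommRing A] [Field K] (ψ : A →+* K)

-- `extendScalars ψ` is, by definition, base change along `ψ.toAlgebra`.
noncomputable def extendScalarsFinBasis (m : ℕ) :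
    Basis (Fin m) K ((extendScalars ψ).obj (of A (Fin m → A))) :=
  letI := ψ.toAlgebra
  Algebra.TensorProduct.basis K (Pi.basisFun A (Fin m))

theorem toMatrix_extendScalars_map {m m' : ℕ}
    (l : of A (Fin m → A) ⟶ of A (Fin m' → A)) :
    LinearMap.toMatrix (extendScalarsFinBasis ψ m) (extendScalarsFinBasis ψ m')
      ((extendScalars ψ).map l).hom = (LinearMap.toMatrix' l.hom).map ψ :=
  letI := ψ.toAlgebra
  LinearMap.toMatrix_baseChange K l.hom (Pi.basisFun A (Fin m)) (Pi.basisFun A (Fin m'))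

theorem finrank_range_extendScalars_map {m m' : ℕ}
    (l : of A (Fin m → A) ⟶ of A (Fin m' → A)) :
    finrank K (LinearMap.range ((extendScalars ψ).map l).hom) =
      ((LinearMap.toMatrix' l.hom).map ψ).rank := by
  rw [← toMatrix_extendScalars_map, Matrix.rank_eq_finrank_range_toLin _
    (extendScalarsFinBasis ψ m') (extendScalarsFinBasis ψ m), Matrix.toLin_toMatrix]

theorem extendScalars_map_sub {X Y : ModuleCat A} (f g : X ⟶ Y) :
    ((extendScalars ψ).map (f - g)).hom =
      ((extendScalars ψ).map f).hom - ((extendScalars ψ).map g).hom :=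
  letI := ψ.toAlgebra
  LinearMap.baseChange_sub f.hom g.hom

end ModuleCat

theorem LinearMap.finrank_range_comp_of_injective {R U V W : Type*} [Ring R] [AddCommGroup U]
    [AddCommGroup V] [AddCommGroup W] [Module R U] [Module R V] [Module R W] (g : V →ₗ[R] W)
    (f : U →ₗ[R] V) (hg : Function.Injective g) :
    finrank R (LinearMap.range (g ∘ₗ f)) = finrank R (LinearMap.range f) := by
  rw [LinearMap.range_comp]
  exact (Submodule.equivMapOfInjective g hg _).finrank_eq.symm

theorem CategoryTheory.Retract.leftInverse_hom {R : Type*} [Ring R] {X Y : ModuleCat R}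
    (h : Retract X Y) : Function.LeftInverse h.r.hom h.i.hom :=
  fun x => ConcreteCategory.congr_hom h.retract x

namespace ModuleCat

theorem exists_retract_finFun {A : Type*} [CommRing A] (X : ModuleCat A)
    [Module.Finite A X] [Module.Projective A X] :
    ∃ m : ℕ, Nonempty (Retract X (of A (Fin m → A))) := by
  obtain ⟨m, π, hπ⟩ := Module.Finite.exists_fin' A X
  obtain ⟨s, hs⟩ := Module.projective_lifting_property π LinearMap.id hπ
  exact ⟨m, ⟨{ i := ofHom s, r := ofHom π, retract := hom_ext hs }⟩⟩

variable {A K : Type*} [CommRing A] [Field K] (ψ : A →+* K) {X : ModuleCat A} {m : ℕ}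

theorem finiteDimensional_extendScalars_obj_of_retract
    (h : Retract X (of A (Fin m → A))) : FiniteDimensional K ((extendScalars ψ).obj X) :=
  have := Module.Finite.of_basis (extendScalarsFinBasis ψ m)
  Module.Finite.of_surjective _ (h.map (extendScalars ψ)).leftInverse_hom.surjective

theorem finrank_range_extendScalars_map_of_retract {Y : ModuleCat A} {m' : ℕ}
    (h : Retract X (of A (Fin m → A))) (hY : Retract Y (of A (Fin m' → A)))
    (f : X ⟶ Y) :
    finrank K (LinearMap.range ((extendScalars ψ).map f).hom) =
      ((LinearMap.toMatrix' (h.r ≫ f ≫ hY.i).hom).map ψ).rank := by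
  have hr : Function.Surjective ((extendScalars ψ).map h.r).hom :=
    (h.map (extendScalars ψ)).leftInverse_hom.surjective
  have hi : Function.Injective ((extendScalars ψ).map hY.i).hom :=
    (hY.map (extendScalars ψ)).leftInverse_hom.injective
  rw [← finrank_range_extendScalars_map, Functor.map_comp, Functor.map_comp, hom_comp, hom_comp,
    LinearMap.range_comp_of_range_eq_top _ (LinearMap.range_eq_top.2 hr),
    LinearMap.finrank_range_comp_of_injective _ _ hi]

theorem finrank_extendScalars_obj_add_rank_of_retract
    (h : Retract X (of A (Fin m → A))) :
    finrank K ((extendScalars ψ).obj X) +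
      ((LinearMap.toMatrix' (𝟙 _ - h.r ≫ h.i).hom).map ψ).rank = m := by
  have := Module.Finite.of_basis (extendScalarsFinBasis ψ m)
  have hr : Function.Surjective ((extendScalars ψ).map h.r).hom :=
    (h.map (extendScalars ψ)).leftInverse_hom.surjective
  have hi : Function.Injective ((extendScalars ψ).map h.i).hom :=
    (h.map (extendScalars ψ)).leftInverse_hom.injective
  have hq : IsIdempotentElem ((extendScalars ψ).map (h.r ≫ h.i)).hom := by
    rw [IsIdempotentElem, Module.End.mul_eq_comp, ← hom_comp, ← Functor.map_comp,
      Category.assoc, h.retract_assoc]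
  have hrange : finrank K (LinearMap.range ((extendScalars ψ).map (h.r ≫ h.i)).hom) =
      finrank K ((extendScalars ψ).obj X) := by
    rw [Functor.map_comp, hom_comp, LinearMap.range_comp_of_range_eq_top _
      (LinearMap.range_eq_top.2 hr), LinearMap.finrank_range_of_inj hi]
  rw [← finrank_range_extendScalars_map, extendScalars_map_sub, CategoryTheory.Functor.map_id,
    hom_id, ← hrange, LinearMap.IsIdempotentElem.range_eq_ker_one_sub hq, add_comm,
    ← Module.End.one_eq_id, LinearMap.finrank_range_add_finrank_ker,
    finrank_eq_card_basis (extendScalarsFinBasis ψ m), Fintype.card_fin]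

end ModuleCat

section Homology

variable {k : Type*} [Field k]

theorem CategoryTheory.ShortComplex.finrank_homology_add_finrank_range_add_finrank_range
    (S : ShortComplex (ModuleCat k)) [FiniteDimensional k S.X₂] :
    finrank k S.homology + finrank k (LinearMap.range S.f.hom) +
      finrank k (LinearMap.range S.g.hom) = finrank k S.X₂ := by
  have hH : finrank k S.homology =
      finrank k (LinearMap.ker S.g.hom ⧸ LinearMap.range S.moduleCatToCycles) :=
    S.moduleCatHomologyIso.toLinearEquiv.finrank_eq
  have hf : finrank k (LinearMap.range S.moduleCatToCycles) =
      finrank k (LinearMap.range S.f.hom) := by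
    rw [← LinearMap.finrank_range_comp_of_injective _ _
      (LinearMap.ker S.g.hom).injective_subtype]
    rfl
  rw [hH, ← hf, Submodule.finrank_quotient_add_finrank, add_comm,
    LinearMap.finrank_range_add_finrank_ker]

theorem CochainComplex.finrank_homology_add_finrank_range_add_finrank_range
    (C : CochainComplex (ModuleCat k) ℤ) (i : ℤ) [FiniteDimensional k (C.X i)] :
    finrank k (C.homology i) + finrank k (LinearMap.range (C.d (i - 1) i).hom) +
      finrank k (LinearMap.range (C.d i (i + 1)).hom) = finrank k (C.X i) := by
  have : FiniteDimensional k (C.sc' (i - 1) i (i + 1)).X₂ := ‹FiniteDimensional k (C.X i)›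
  have hH : finrank k (C.homology i) = finrank k (C.sc' (i - 1) i (i + 1)).homology :=
    (ShortComplex.homologyMapIso
      (C.isoSc' (i - 1) i (i + 1) (by simp) (by simp))).toLinearEquiv.finrank_eq
  rw [hH]
  exact (C.sc' (i - 1) i (i + 1)).finrank_homology_add_finrank_range_add_finrank_range

end Homology

theorem finrank_homology_extendScalars_add_ranks {A K : Type u} [CommRing A] [Field K]
    (ψ : A →+* K) (M : CochainComplex (ModuleCat A) ℤ) (i : ℤ) {m₀ m₁ m₂ : ℕ}
    (h₀ : Retract (M.X (i - 1)) (ModuleCat.of A (Fin m₀ → A)))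
    (h₁ : Retract (M.X i) (ModuleCat.of A (Fin m₁ → A)))
    (h₂ : Retract (M.X (i + 1)) (ModuleCat.of A (Fin m₂ → A))) :
    finrank K ((((ModuleCat.extendScalars ψ).mapHomologicalComplex _).obj M).homology i) +
      (((LinearMap.toMatrix' (h₀.r ≫ M.d (i - 1) i ≫ h₁.i).hom).map ψ).rank +
        ((LinearMap.toMatrix' (h₁.r ≫ M.d i (i + 1) ≫ h₂.i).hom).map ψ).rank +
        ((LinearMap.toMatrix' (𝟙 _ - h₁.r ≫ h₁.i).hom).map ψ).rank) = m₁ := by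
  set C := ((ModuleCat.extendScalars ψ).mapHomologicalComplex _).obj M
  have : FiniteDimensional K (C.X i) :=
    ModuleCat.finiteDimensional_extendScalars_obj_of_retract ψ h₁
  have hd₀ : finrank K (LinearMap.range (C.d (i - 1) i).hom) = _ :=
    ModuleCat.finrank_range_extendScalars_map_of_retract ψ h₀ h₁ (M.d (i - 1) i)
  have hd₁ : finrank K (LinearMap.range (C.d i (i + 1)).hom) = _ :=
    ModuleCat.finrank_range_extendScalars_map_of_retract ψ h₁ h₂ (M.d i (i + 1))
  have hX : finrank K (C.X i) + _ = m₁ :=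
    ModuleCat.finrank_extendScalars_obj_add_rank_of_retract ψ h₁
  have hC := CochainComplex.finrank_homology_add_finrank_range_add_finrank_range C i
  omega

/-- For a perfect complex `M` over a commutative ring `A` and each integer `i`, the function
`p ↦ dim_{k(p)} H^i(M ⊗^L_A k(p))` is upper semi-continuous on `Spec A`: for each `n`, the
locus where the rank is at least `n` is Zariski closed. -/
theorem rank_upper_semicontinuous (A : Type) [CommRing A]
    (M : CochainComplex (ModuleCat.{0} A) ℤ) (hM : IsPerfectData A M) (i : ℤ) (n : ℕ) :
    IsClosed {p : PrimeSpectrum A |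
      n ≤ Module.finrank (kappa A p) ((fiberComplex A p M).homology i)} := by
  have hretract (j : ℤ) :
      ∃ m : ℕ, Nonempty (Retract (M.X j) (ModuleCat.of A (Fin m → A))) :=
    have := (hM.2 j).1
    have := (hM.2 j).2
    (M.X j).exists_retract_finFun
  obtain ⟨m₀, ⟨h₀⟩⟩ := hretract (i - 1)
  obtain ⟨m₁, ⟨h₁⟩⟩ := hretract i
  obtain ⟨m₂, ⟨h₂⟩⟩ := hretract (i + 1)
  have hsum (p : PrimeSpectrum A) :=
    finrank_homology_extendScalars_add_ranks (algebraMap A (kappa A p)) M i h₀ h₁ h₂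
  refine upperSemicontinuous_iff_isClosed_preimage.1 ?_ n
  exact upperSemicontinuous_of_add_eq_of_lowerSemicontinuous (hfg := hsum)
    (((lowerSemicontinuous_rank_map_residueField _).add
      (lowerSemicontinuous_rank_map_residueField _)).add
        (lowerSemicontinuous_rank_map_residueField _))
end
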